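/- Let r, R_N satisfy r² ~ Exp(πλ) and R_N² ~ Gamma(N, πλ) with N ≥ 2, not necessarily independent. Then E[r⁴/R_N²] ≤ (E[r⁸])^{1/2}(E[1/R_N⁴])^{1/2} when N ≥ 3, and this bound is O(N^{-1}); hence the expected truncation error E[δ_N(T r⁴, R_N)] ≤ π λ T · E[r⁴/R_N²] = O(N^{-1}) for path-loss exponent η = 4. -/

import Mathlib

open MeasureTheory ProbabilityTheory Real Set

lemma gamma_moment {a c p : ℝ} (ha : 0 < a) (hc : 0 < c) (hap : 0 < a + p)
    {g : ℝ → ℝ} (hg : Measurable g) (hg0 : ∀ x, 0 ≤ g x)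
    (hgx : ∀ x : ℝ, 0 < x → g x = x ^ p) :
    Integrable g (gammaMeasure a c) ∧
      ∫ x, g x ∂(gammaMeasure a c) =
        c ^ a / Real.Gamma a * ((1 / c) ^ (a + p) * Real.Gamma (a + p)) := by
  have hIoi : IntegrableOn (fun x : ℝ => x ^ (a + p - 1) * Real.exp (-(c * x))) (Ioi 0) := by
    have h := integrableOn_rpow_mul_exp_neg_mul_rpow
      (s := a + p - 1) (p := 1) (b := c) (by linarith) one_pos hc
    refine h.congr_fun (fun x hx => ?_) measurableSet_Ioi
    beta_reduce; rw [Real.rpow_one]; ring_nf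
  have key : (fun x => g x * gammaPDFReal a c x) =ᵐ[(volume : Measure ℝ)]
      (Ioi (0:ℝ)).indicator
        (fun x => c ^ a / Real.Gamma a * (x ^ (a + p - 1) * Real.exp (-(c * x)))) := by
    filter_upwards [compl_mem_ae_iff.mpr (measure_singleton (0:ℝ))] with x hx
    rcases lt_or_gt_of_ne (Set.mem_compl_singleton_iff.mp hx) with hlt | hgt
    · simp [Set.indicator_apply, mem_Ioi, hlt.not_gt, gammaPDFReal, not_le.mpr hlt]
    · rw [Set.indicator_apply]
      simp only [mem_Ioi, if_pos hgt]
      rw [gammaPDFReal, if_pos hgt.le, hgx x hgt,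
        show a + p - 1 = p + (a - 1) by ring, Real.rpow_add hgt]
      ring
  have hpdf : ∀ x, (ENNReal.ofReal (gammaPDFReal a c x)).toReal = gammaPDFReal a c x := fun x =>
    ENNReal.toReal_ofReal (gammaPDFReal_nonneg ha hc x)
  constructor
  · have hint : Integrable
        (fun x => g x * (ENNReal.ofReal (gammaPDFReal a c x)).toReal) (volume : Measure ℝ) := by
      simp only [hpdf]
      exact ((integrable_indicator_iff measurableSet_Ioi).mpr
        ((hIoi.const_mul _))).congr key.symm
    exact (integrable_withDensity_iff (μ := (volume : Measure ℝ))
      ((measurable_gammaPDFReal a c).ennreal_ofReal)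
      (ae_of_all _ fun x => ENNReal.ofReal_lt_top)).mpr hint
  · have hrw : gammaPDF a c = fun x => ((gammaPDFReal a c x).toNNReal : ENNReal) := rfl
    calc ∫ x, g x ∂(gammaMeasure a c)
        = ∫ x, ((gammaPDFReal a c x).toNNReal) • g x := by
          rw [gammaMeasure, hrw]
          exact integral_withDensity_eq_integral_smul
            ((measurable_gammaPDFReal a c).real_toNNReal) g
      _ = ∫ x, g x * gammaPDFReal a c x := by
          refine integral_congr_ae (ae_of_all _ fun x => ?_)
          simp only [NNReal.smul_def, Real.coe_toNNReal _ (gammaPDFReal_nonneg ha hc x), smul_eq_mul]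
          ring
      _ = ∫ x, (Ioi (0:ℝ)).indicator
            (fun x => c ^ a / Real.Gamma a * (x ^ (a + p - 1) * Real.exp (-(c * x)))) x :=
          integral_congr_ae key
      _ = ∫ x in Ioi (0:ℝ), c ^ a / Real.Gamma a * (x ^ (a + p - 1) * Real.exp (-(c * x))) :=
          integral_indicator measurableSet_Ioi
      _ = c ^ a / Real.Gamma a * ∫ x in Ioi (0:ℝ), x ^ (a + p - 1) * Real.exp (-(c * x)) :=
          integral_const_mul _ _
      _ = c ^ a / Real.Gamma a * ((1 / c) ^ (a + p) * Real.Gamma (a + p)) := by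
          rw [integral_rpow_mul_exp_neg_mul_Ioi hap hc]

lemma exp_moment4 {c : ℝ} (hc : 0 < c) :
    Integrable (fun x : ℝ => x ^ 4) (expMeasure c) ∧
      ∫ x, x ^ 4 ∂(expMeasure c) = 24 / c ^ 4 := by
  have h := gamma_moment (a := 1) (c := c) (p := 4) one_pos hc (by norm_num)
    (g := fun x : ℝ => x ^ 4) (measurable_id.pow_const 4) (fun x => by positivity)
    (fun x hx => by rw [show (4:ℝ) = ((4:ℕ):ℝ) by norm_num, Real.rpow_natCast])
  rw [expMeasure]
  refine ⟨h.1, ?_⟩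
  rw [h.2, Real.Gamma_one]
  rw [show (1:ℝ) + 4 = ((4:ℕ):ℝ) + 1 by norm_num, Real.Gamma_nat_eq_factorial,
    show ((4:ℕ):ℝ) + 1 = ((5:ℕ):ℝ) by norm_num, Real.rpow_natCast, Real.rpow_one]
  have hc5 : c ^ 5 ≠ 0 := by positivity
  have hc' : c ≠ 0 := hc.ne'
  field_simp
  norm_num [Nat.factorial]

lemma gamma_inv_moment {c : ℝ} (hc : 0 < c) (N : ℕ) (hN : 3 ≤ N) :
    Integrable (fun x : ℝ => 1 / x ^ 2) (gammaMeasure N c) ∧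
      ∫ x, 1 / x ^ 2 ∂(gammaMeasure N c) = c ^ 2 / (((N:ℝ) - 1) * ((N:ℝ) - 2)) := by
  have hN3 : (3:ℝ) ≤ (N:ℝ) := by exact_mod_cast hN
  have ha : (0:ℝ) < (N:ℝ) := by linarith
  have hap : (0:ℝ) < (N:ℝ) + (-2) := by linarith
  have h := gamma_moment (p := (-2:ℝ)) ha hc hap
    (g := fun x : ℝ => 1 / x ^ 2)
    (measurable_const.div (measurable_id.pow_const 2)) (fun x => by positivity)
    (fun x hx => by
      rw [show (-2:ℝ) = -((2:ℕ):ℝ) by norm_num, Real.rpow_neg hx.le, Real.rpow_natCast]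
      exact one_div _)
  refine ⟨h.1, ?_⟩
  rw [h.2, show (N:ℝ) + (-2) = (N:ℝ) - 2 by ring]
  have h1 : ((N:ℝ) - 1) ≠ 0 := by linarith
  have h2 : ((N:ℝ) - 2) ≠ 0 := by linarith
  have hG : Real.Gamma (N:ℝ) = ((N:ℝ) - 1) * (((N:ℝ) - 2) * Real.Gamma ((N:ℝ) - 2)) := by
    have e1 : Real.Gamma ((N:ℝ) - 1 + 1) = ((N:ℝ) - 1) * Real.Gamma ((N:ℝ) - 1) :=
      Real.Gamma_add_one h1
    have e2 : Real.Gamma ((N:ℝ) - 2 + 1) = ((N:ℝ) - 2) * Real.Gamma ((N:ℝ) - 2) :=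
      Real.Gamma_add_one h2
    calc Real.Gamma (N:ℝ) = Real.Gamma ((N:ℝ) - 1 + 1) := by norm_num
      _ = ((N:ℝ) - 1) * Real.Gamma ((N:ℝ) - 1) := e1
      _ = ((N:ℝ) - 1) * Real.Gamma ((N:ℝ) - 2 + 1) := by rw [show (N:ℝ) - 2 + 1 = (N:ℝ) - 1 by ring]
      _ = ((N:ℝ) - 1) * (((N:ℝ) - 2) * Real.Gamma ((N:ℝ) - 2)) := by rw [e2]
  have hcN : c ^ ((N:ℝ)) * (1 / c) ^ ((N:ℝ) - 2) = c ^ 2 := by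
    rw [one_div, Real.inv_rpow hc.le, ← div_eq_mul_inv, ← Real.rpow_sub hc,
      show (N:ℝ) - ((N:ℝ) - 2) = ((2:ℕ):ℝ) by ring, Real.rpow_natCast]
  have hGpos : 0 < Real.Gamma ((N:ℝ) - 2) := Real.Gamma_pos_of_pos (by linarith)
  calc c ^ ((N:ℝ)) / Real.Gamma (N:ℝ) * ((1 / c) ^ ((N:ℝ) - 2) * Real.Gamma ((N:ℝ) - 2))
      = (c ^ ((N:ℝ)) * (1 / c) ^ ((N:ℝ) - 2)) * (Real.Gamma ((N:ℝ) - 2) / Real.Gamma (N:ℝ)) := by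
        ring
    _ = c ^ 2 * (Real.Gamma ((N:ℝ) - 2) /
          (((N:ℝ) - 1) * (((N:ℝ) - 2) * Real.Gamma ((N:ℝ) - 2)))) := by rw [hcN, hG]
    _ = c ^ 2 / (((N:ℝ) - 1) * ((N:ℝ) - 2)) := by
        rw [eq_div_iff (mul_ne_zero h1 h2)]
        field_simp

lemma delta_integral_nonneg {s R : ℝ} (hs : 0 ≤ s) (hR : 0 < R) :
    0 ≤ ∫ t in Ioi R, (s * t ^ (-(4:ℝ)) / (1 + s * t ^ (-(4:ℝ)))) * t := by
  refine setIntegral_nonneg measurableSet_Ioi fun t ht => ?_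
  have ht0 : 0 < t := hR.trans ht
  have h4 : 0 ≤ t ^ (-(4:ℝ)) := Real.rpow_nonneg ht0.le _
  have hden : 0 < 1 + s * t ^ (-(4:ℝ)) := by positivity
  positivity

lemma delta_bound {lam s R : ℝ} (hlam : 0 < lam) (hs : 0 ≤ s) (hR : 0 < R) :
    1 - Real.exp (-(2 * π * lam *
        ∫ t in Ioi R, (s * t ^ (-(4:ℝ)) / (1 + s * t ^ (-(4:ℝ)))) * t)) ≤
      π * lam * s / R ^ 2 := by
  set I := ∫ t in Ioi R, (s * t ^ (-(4:ℝ)) / (1 + s * t ^ (-(4:ℝ)))) * t with hI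
  have hpi : (0:ℝ) < π := Real.pi_pos
  have hexp : 1 - Real.exp (-(2 * π * lam * I)) ≤ 2 * π * lam * I := by
    have := Real.add_one_le_exp (-(2 * π * lam * I))
    linarith
  have hIb : I ≤ s * (R ^ (-(2:ℝ)) / 2) := by
    have hint : IntegrableOn (fun t : ℝ => s * t ^ (-(3:ℝ))) (Ioi R) := by
      exact (integrableOn_Ioi_rpow_of_lt (by norm_num) hR).const_mul s
    have hle : ∀ t ∈ Ioi R, (s * t ^ (-(4:ℝ)) / (1 + s * t ^ (-(4:ℝ)))) * t ≤
        s * t ^ (-(3:ℝ)) := by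
      intro t ht
      have ht0 : 0 < t := hR.trans ht
      have h4 : 0 ≤ t ^ (-(4:ℝ)) := Real.rpow_nonneg ht0.le _
      have hnum : 0 ≤ s * t ^ (-(4:ℝ)) := mul_nonneg hs h4
      have hdiv : s * t ^ (-(4:ℝ)) / (1 + s * t ^ (-(4:ℝ))) ≤ s * t ^ (-(4:ℝ)) :=
        div_le_self hnum (by linarith)
      have : (s * t ^ (-(4:ℝ)) / (1 + s * t ^ (-(4:ℝ)))) * t ≤ s * t ^ (-(4:ℝ)) * t :=
        mul_le_mul_of_nonneg_right hdiv ht0.le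
      refine this.trans_eq ?_
      rw [mul_assoc, ← Real.rpow_add_one ht0.ne' (-(4:ℝ))]
      norm_num
    have hmono : I ≤ ∫ t in Ioi R, s * t ^ (-(3:ℝ)) := by
      refine integral_mono_of_nonneg ?_ hint ?_
      · refine (ae_restrict_iff' measurableSet_Ioi).mpr (ae_of_all _ fun t ht => ?_)
        have ht0 : 0 < t := hR.trans ht
        have h4 : 0 ≤ t ^ (-(4:ℝ)) := Real.rpow_nonneg ht0.le _
        have hden : 0 < 1 + s * t ^ (-(4:ℝ)) := by positivity
        positivity
      · exact (ae_restrict_iff' measurableSet_Ioi).mpr (ae_of_all _ hle)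
    have hval : ∫ t in Ioi R, s * t ^ (-(3:ℝ)) = s * (R ^ (-(2:ℝ)) / 2) := by
      rw [integral_const_mul, integral_Ioi_rpow_of_lt (by norm_num) hR]
      norm_num
    rw [← hval]; exact hmono
  have hR2 : R ^ (-(2:ℝ)) = 1 / R ^ 2 := by
    rw [show (-(2:ℝ)) = -((2:ℕ):ℝ) by norm_num, Real.rpow_neg hR.le, Real.rpow_natCast, one_div]
  have : 2 * π * lam * I ≤ π * lam * s / R ^ 2 := by
    have h2 : 2 * π * lam * I ≤ 2 * π * lam * (s * (R ^ (-(2:ℝ)) / 2)) := by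
      have : (0:ℝ) < 2 * π * lam := by positivity
      exact mul_le_mul_of_nonneg_left hIb this.le
    rw [hR2] at h2
    calc 2 * π * lam * I ≤ 2 * π * lam * (s * (1 / R ^ 2 / 2)) := h2
      _ = π * lam * s / R ^ 2 := by field_simp
  linarith

theorem eta_four_truncation_rate
    {Ω : Type*} [MeasureSpace Ω] [IsProbabilityMeasure (ℙ : Measure Ω)]
    (lam T : ℝ) (hlam : 0 < lam) (hT : 0 < T) (N : ℕ) (hN : 3 ≤ N)
    (r RN : Ω → ℝ) (hr : Measurable r) (hRN : Measurable RN)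
    (hrnonneg : ∀ ω, 0 ≤ r ω) (hRNpos : ∀ ω, 0 < RN ω)
    (hrdist : Measure.map (fun ω => r ω ^ 2) ℙ = expMeasure (π * lam))
    (hRNdist : Measure.map (fun ω => RN ω ^ 2) ℙ = gammaMeasure N (π * lam))
    (δ : ℝ → ℝ → ℝ)
    (hδ : ∀ s R : ℝ, δ s R =
      1 - Real.exp (-(2 * π * lam *
        ∫ t in Ioi R, (s * t ^ (-(4:ℝ)) / (1 + s * t ^ (-(4:ℝ)))) * t))) :
    (∫ ω, r ω ^ 4 / RN ω ^ 2 ∂ℙ ≤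
        Real.sqrt (∫ ω, r ω ^ 8 ∂ℙ) * Real.sqrt (∫ ω, 1 / RN ω ^ 4 ∂ℙ)) ∧
    (∫ ω, δ (T * r ω ^ 4) (RN ω) ∂ℙ ≤ π * lam * T * ∫ ω, r ω ^ 4 / RN ω ^ 2 ∂ℙ) ∧
    (Real.sqrt (∫ ω, r ω ^ 8 ∂ℙ) * Real.sqrt (∫ ω, 1 / RN ω ^ 4 ∂ℙ) ≤
        Real.sqrt 24 / (π * lam * ((N : ℝ) - 2))) := by
  have hpi : (0:ℝ) < π := Real.pi_pos
  set c : ℝ := π * lam with hc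
  have hcpos : 0 < c := by positivity
  have hN3 : (3:ℝ) ≤ (N:ℝ) := by exact_mod_cast hN
  -- moments via pushforward
  have hr2 : AEMeasurable (fun ω => r ω ^ 2) ℙ := (hr.pow_const 2).aemeasurable
  have hRN2 : AEMeasurable (fun ω => RN ω ^ 2) ℙ := (hRN.pow_const 2).aemeasurable
  have hg4 : AEStronglyMeasurable (fun x : ℝ => x ^ 4)
      (Measure.map (fun ω => r ω ^ 2) ℙ) := (measurable_id.pow_const 4).aestronglyMeasurable
  have hginv : AEStronglyMeasurable (fun x : ℝ => 1 / x ^ 2)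
      (Measure.map (fun ω => RN ω ^ 2) ℙ) :=
    (measurable_const.div (measurable_id.pow_const 2)).aestronglyMeasurable
  obtain ⟨hEint, hEval⟩ := exp_moment4 hcpos
  obtain ⟨hGint, hGval⟩ := gamma_inv_moment hcpos N hN
  have h8int : Integrable (fun ω => r ω ^ 8) ℙ := by
    have := (integrable_map_measure hg4 hr2).mp (by rw [hrdist]; exact hEint)
    exact this.congr (ae_of_all _ fun ω => by simp [Function.comp]; ring)
  have h8val : ∫ ω, r ω ^ 8 ∂ℙ = 24 / c ^ 4 := by
    calc ∫ ω, r ω ^ 8 ∂ℙ = ∫ ω, (r ω ^ 2) ^ 4 ∂ℙ :=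
          integral_congr_ae (ae_of_all _ fun ω => by ring)
      _ = ∫ x, x ^ 4 ∂(Measure.map (fun ω => r ω ^ 2) ℙ) := (integral_map hr2 hg4).symm
      _ = 24 / c ^ 4 := by rw [hrdist]; exact hEval
  have h4int : Integrable (fun ω => 1 / RN ω ^ 4) ℙ := by
    have := (integrable_map_measure hginv hRN2).mp (by rw [hRNdist]; exact hGint)
    exact this.congr (ae_of_all _ fun ω => by simp [Function.comp]; ring)
  have h4val : ∫ ω, 1 / RN ω ^ 4 ∂ℙ = c ^ 2 / (((N:ℝ) - 1) * ((N:ℝ) - 2)) := by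
    calc ∫ ω, 1 / RN ω ^ 4 ∂ℙ = ∫ ω, 1 / (RN ω ^ 2) ^ 2 ∂ℙ :=
          integral_congr_ae (ae_of_all _ fun ω => by ring)
      _ = ∫ x, 1 / x ^ 2 ∂(Measure.map (fun ω => RN ω ^ 2) ℙ) := (integral_map hRN2 hginv).symm
      _ = c ^ 2 / (((N:ℝ) - 1) * ((N:ℝ) - 2)) := by rw [hRNdist]; exact hGval
  -- Cauchy-Schwarz
  have hpq : (2:ℝ).HolderConjugate 2 := Real.holderConjugate_iff.mpr ⟨one_lt_two, by norm_num⟩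
  have hof : (ENNReal.ofReal (2:ℝ)) = 2 := ENNReal.ofReal_ofNat 2
  have memf : MemLp (fun ω => r ω ^ 4) (ENNReal.ofReal (2:ℝ)) ℙ := by
    rw [hof]
    exact (memLp_two_iff_integrable_sq (hr.pow_const 4).aestronglyMeasurable).mpr
      (h8int.congr (ae_of_all _ fun ω => by ring))
  have memg : MemLp (fun ω => 1 / RN ω ^ 2) (ENNReal.ofReal (2:ℝ)) ℙ := by
    rw [hof]
    exact (memLp_two_iff_integrable_sq
        (measurable_const.div (hRN.pow_const 2)).aestronglyMeasurable).mpr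
      (h4int.congr (ae_of_all _ fun ω => by simp only [Pi.div_apply]; ring))
  have hCS := integral_mul_le_Lp_mul_Lq_of_nonneg hpq
    (ae_of_all _ fun ω => by positivity) (ae_of_all _ fun ω => by positivity) memf memg
  have hrpow2 : ∀ x : ℝ, x ^ (2:ℝ) = x ^ 2 := fun x => by
    rw [show (2:ℝ) = ((2:ℕ):ℝ) by norm_num, Real.rpow_natCast]
  have part1 : ∫ ω, r ω ^ 4 / RN ω ^ 2 ∂ℙ ≤
      Real.sqrt (∫ ω, r ω ^ 8 ∂ℙ) * Real.sqrt (∫ ω, 1 / RN ω ^ 4 ∂ℙ) := by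
    have e1 : ∫ ω, r ω ^ 4 * (1 / RN ω ^ 2) ∂ℙ = ∫ ω, r ω ^ 4 / RN ω ^ 2 ∂ℙ :=
      integral_congr_ae (ae_of_all _ fun ω => by ring)
    have e2 : ∫ ω, (r ω ^ 4) ^ (2:ℝ) ∂ℙ = ∫ ω, r ω ^ 8 ∂ℙ :=
      integral_congr_ae (ae_of_all _ fun ω => by simp only [hrpow2]; ring)
    have e3 : ∫ ω, (1 / RN ω ^ 2) ^ (2:ℝ) ∂ℙ = ∫ ω, 1 / RN ω ^ 4 ∂ℙ :=
      integral_congr_ae (ae_of_all _ fun ω => by simp only [hrpow2]; ring)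
    rw [e1, e2, e3] at hCS
    rw [Real.sqrt_eq_rpow, Real.sqrt_eq_rpow]
    exact hCS
  -- integrability of the product
  have hprodint : Integrable (fun ω => r ω ^ 4 / RN ω ^ 2) ℙ := by
    refine Integrable.mono' ((h8int.add h4int).div_const 2)
      ((hr.pow_const 4).div (hRN.pow_const 2)).aestronglyMeasurable
      (ae_of_all _ fun ω => ?_)
    have hR2 : 0 < RN ω ^ 2 := pow_pos (hRNpos ω) 2
    have hR0 : RN ω ≠ 0 := (hRNpos ω).ne'
    rw [Real.norm_of_nonneg (by positivity)]
    have e3 : r ω ^ 4 / RN ω ^ 2 = r ω ^ 4 * (1 / RN ω ^ 2) := by ring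
    have e2 : r ω ^ 8 = (r ω ^ 4) ^ 2 := by ring
    have e1 : 1 / RN ω ^ 4 = (1 / RN ω ^ 2) ^ 2 := by
      field_simp
    simp only [Pi.add_apply]
    rw [e3, e2, e1]
    nlinarith [sq_nonneg (r ω ^ 4 - 1 / RN ω ^ 2)]
  -- Part 2
  have part2 : ∫ ω, δ (T * r ω ^ 4) (RN ω) ∂ℙ ≤ π * lam * T * ∫ ω, r ω ^ 4 / RN ω ^ 2 ∂ℙ := by
    have hdnonneg : ∀ᵐ ω ∂ℙ, (0:ℝ) ≤ δ (T * r ω ^ 4) (RN ω) := by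
      refine ae_of_all _ fun ω => ?_
      rw [hδ]
      have hI := delta_integral_nonneg (s := T * r ω ^ 4)
        (by have := hrnonneg ω; positivity) (hRNpos ω)
      have hx : (0:ℝ) ≤ 2 * π * lam * ∫ t in Ioi (RN ω),
          (T * r ω ^ 4 * t ^ (-(4:ℝ)) / (1 + T * r ω ^ 4 * t ^ (-(4:ℝ)))) * t := by
        apply mul_nonneg (by positivity) hI
      have := Real.exp_le_one_iff.mpr (neg_nonpos.mpr hx)
      linarith
    have hle : ∀ ω, δ (T * r ω ^ 4) (RN ω) ≤ π * lam * T * (r ω ^ 4 / RN ω ^ 2) := by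
      intro ω
      rw [hδ]
      have hb := delta_bound (lam := lam) (s := T * r ω ^ 4) (R := RN ω) hlam
        (by have := hrnonneg ω; positivity) (hRNpos ω)
      exact hb.trans_eq (by ring)
    calc ∫ ω, δ (T * r ω ^ 4) (RN ω) ∂ℙ
        ≤ ∫ ω, π * lam * T * (r ω ^ 4 / RN ω ^ 2) ∂ℙ :=
          integral_mono_of_nonneg hdnonneg (hprodint.const_mul (π * lam * T))
            (ae_of_all _ hle)
      _ = π * lam * T * ∫ ω, r ω ^ 4 / RN ω ^ 2 ∂ℙ := integral_const_mul _ _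
  -- Part 3
  have h1 : (0:ℝ) < (N:ℝ) - 2 := by linarith
  have h0 : (0:ℝ) < (N:ℝ) - 1 := by linarith
  have part3 : Real.sqrt (∫ ω, r ω ^ 8 ∂ℙ) * Real.sqrt (∫ ω, 1 / RN ω ^ 4 ∂ℙ) ≤
      Real.sqrt 24 / (π * lam * ((N:ℝ) - 2)) := by
    rw [h8val, h4val]
    have hden : (0:ℝ) < (c * ((N:ℝ) - 2)) ^ 2 := by positivity
    have hD2pos : (0:ℝ) < c ^ 2 * (((N:ℝ) - 1) * ((N:ℝ) - 2)) :=
      mul_pos (pow_pos hcpos 2) (mul_pos h0 h1)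
    calc Real.sqrt (24 / c ^ 4) * Real.sqrt (c ^ 2 / (((N:ℝ) - 1) * ((N:ℝ) - 2)))
        = Real.sqrt (24 / c ^ 4 * (c ^ 2 / (((N:ℝ) - 1) * ((N:ℝ) - 2)))) :=
          (Real.sqrt_mul (by positivity) _).symm
      _ = Real.sqrt (24 / (c ^ 2 * (((N:ℝ) - 1) * ((N:ℝ) - 2)))) := by
          rw [show 24 / c ^ 4 * (c ^ 2 / (((N:ℝ) - 1) * ((N:ℝ) - 2)))
              = 24 / (c ^ 2 * (((N:ℝ) - 1) * ((N:ℝ) - 2))) by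
            field_simp]
      _ ≤ Real.sqrt (24 / (c * ((N:ℝ) - 2)) ^ 2) := by
          apply Real.sqrt_le_sqrt
          rw [div_le_div_iff₀ hD2pos hden]
          nlinarith [mul_nonneg (mul_pos hcpos hcpos).le h1.le]
      _ = Real.sqrt 24 / (c * ((N:ℝ) - 2)) := by
          rw [Real.sqrt_div (by norm_num), Real.sqrt_sq (by positivity)]
    done
  exact ⟨part1, part2, part3⟩
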